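/- For every integer k ≥ 1 and every integer j with 0 ≤ j ≤ k+1, if d(0, 1, s, k, 0) ≠ 0 and all factors in the denominator of ⟨k+1, j⟩(x,s,q) are nonzero, then d(0, 1, s, k, j) / d(0, 1, s, k, 0) = (−s)^{binom(j,2) − k·j} · q^{−k·binom(j,2) + ∑_{i=0}^{j−1} i^2} · ⟨k+1, j⟩(x,s,q), where powers with negative integer exponents are interpreted as integer powers of nonzero field elements. -/

import Mathlib

open Finset

variable {K : Type*} [Field K]

noncomputable def qFibPos (q x t : K) : ℕ → K
  | 0 => 0
  | 1 => 1
  | n + 2 => x * qFibPos q x t (n + 1) + q ^ n * t * qFibPos q x t n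

noncomputable def qFibNeg (q x t : K) : ℕ → K
  | 0 => 0
  | 1 => q / t
  | m + 2 => (qFibNeg q x t m - x * qFibNeg q x t (m + 1)) * q ^ (m + 2) / t

/-- The Carlitz q-Fibonacci polynomial `f(n, x, t)` for `n : ℤ`, defined by `f 0 = 0`,
`f 1 = 1` and `f n = x * f (n-1) + q^(n-2) * t * f (n-2)`, solved backwards for `n < 0`. -/
noncomputable def qFib (q x t : K) : ℤ → K
  | Int.ofNat n => qFibPos q x t n
  | Int.negSucc m => qFibNeg q x t (m + 1)

/-- `fac(k, x, t, m) = ∏_{i=1}^{k} f(i·m, x, t)`. -/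
noncomputable def qFac (q x t : K) (k m : ℕ) : K :=
  ∏ i ∈ Finset.range k, qFib q x t (((i : ℤ) + 1) * m)

/-- The determinant
`d(n, m, s, k, j) = det( f(n+m(i+[i≥j]),x,s)^h · f(n+m(i+[i≥j])-1,x,qs)^{k-h} )_{i,h=0}^{k}`. -/
noncomputable def ddet (q x s : K) (n : ℤ) (m k j : ℕ) : K :=
  Matrix.det (Matrix.of fun i h : Fin (k + 1) =>
    qFib q x s (n + m * ((i : ℕ) + if j ≤ (i : ℕ) then 1 else 0)) ^ (h : ℕ) *
      qFib q x (q * s) (n + m * ((i : ℕ) + if j ≤ (i : ℕ) then 1 else 0) - 1) ^ (k - (h : ℕ)))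

/-- The q-analog of the fibonomial coefficient
`⟨k, j⟩(x,s,q) = (∏_{i=1}^{k} f(i,x,s)) / (∏_{i=1}^{j} f(i,x,q^{j-i}s) · ∏_{i=1}^{k-j} f(i,x,q^j s))`. -/
noncomputable def qFibonomial (q x s : K) (k j : ℕ) : K :=
  (∏ i ∈ Finset.range k, qFib q x s (i + 1)) /
    ((∏ i ∈ Finset.range j, qFib q x (q ^ (j - (i + 1)) * s) (i + 1)) *
      (∏ i ∈ Finset.range (k - j), qFib q x (q ^ j * s) (i + 1)))


/-!
Put `A_i = i + [i ≥ j]`, which is `(j : Fin (k + 2)).succAbove i`, so that `A_0 < ⋯ < A_k`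
enumerate `{0, …, k+1} \ {j}`. The matrix is a homogeneous Vandermonde matrix in the pairs
`(f(A_i, s), f(A_i - 1, qs))`, so its determinant is the product over `i < l` of the minors
`f(A_l, s) f(A_i - 1, qs) - f(A_i, s) f(A_l - 1, qs)`, and a d'Ocagne-type identity evaluates each
minor as `c(A_i) · f(A_l - A_i, q^{A_i} s)` with `c(b) = (-s)^b q^{C(b,2)} / s`. Multiplying the
product of the `f`-factors by those of the pairs through `j` gives the product over all pairs of
`{0, …, k+1}`, independent of `j`; comparing with `j = 0` leaves the fibonomial coefficient. The
constants `c(A_i)^{k-i}` differ from those for `j = 0` only in the rows `i < j`, by the factors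
`((-s) q^i)^{k-i}`.
-/

lemma Nat.succ_choose_two (n : ℕ) : (n + 1).choose 2 = n.choose 2 + n := by
  rw [Nat.choose_succ_succ', Nat.choose_one_right, add_comm]

lemma Fin.val_succAbove_eq {n : ℕ} (p : Fin (n + 1)) (i : Fin n) :
    (p.succAbove i : ℕ) = i + if (p : ℕ) ≤ i then 1 else 0 := by
  rcases lt_or_ge (Fin.castSucc i) p with h | h
  · rw [Fin.succAbove_of_castSucc_lt _ _ h, if_neg (by simpa [Fin.lt_def] using h)]
    simp
  · rw [Fin.succAbove_of_le_castSucc _ _ h, if_pos (by simpa [Fin.le_def] using h)]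
    simp

section PairProducts

variable {M : Type*} [CommMonoid M] {n : ℕ}

lemma Fin.prod_pairs_succAbove (g : Fin (n + 1) → Fin (n + 1) → M) (p : Fin (n + 1)) :
    ∏ i, ∏ l ∈ Ioi i, g i l =
      (∏ i ∈ Iio p, g i p) * (∏ l ∈ Ioi p, g p l) *
        ∏ i : Fin n, ∏ l ∈ Ioi i, g (p.succAbove i) (p.succAbove l) := by
  simp only [← filter_lt_eq_Ioi, ← filter_gt_eq_Iio, prod_filter]
  simp only [Fin.prod_univ_succAbove _ p, lt_irrefl, if_false, one_mul,
    Fin.succAbove_lt_succAbove_iff, prod_mul_distrib]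
  rw [mul_left_comm, ← mul_assoc]

lemma Fin.prod_Ioi_val_eq_prod_range (h : ℕ → M) (p : Fin (n + 1)) :
    ∏ l ∈ Ioi p, h l = ∏ i ∈ range (n - p), h (p + 1 + i) := by
  change ∏ l ∈ Ioi p, h (Fin.valEmbedding l) = _
  rw [← prod_map (Ioi p) Fin.valEmbedding h, Fin.map_valEmbedding_Ioi,
    show Ioo (p : ℕ) (n + 1) = Ico ((p : ℕ) + 1) (n + 1) by ext; simp only [mem_Ioo, mem_Ico]; omega,
    prod_Ico_eq_prod_range, Nat.add_sub_add_right]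

lemma Fin.prod_Iio_val_eq_prod_range (h : ℕ → M) (p : Fin n) :
    ∏ l ∈ Iio p, h l = ∏ i ∈ range p, h i := by
  change ∏ l ∈ Iio p, h (Fin.valEmbedding l) = _
  rw [← prod_map (Iio p) Fin.valEmbedding h, Fin.map_valEmbedding_Iio, Nat.Iio_eq_range]

end PairProducts

lemma qFibPos_add_two (q x t : K) (n : ℕ) :
    qFibPos q x t (n + 2) = x * qFibPos q x t (n + 1) + q ^ n * t * qFibPos q x t n := rfl

lemma qFib_zero (q x t : K) : qFib q x t 0 = 0 := rfl

lemma qFib_neg_one (q x t : K) : qFib q x t (-1) = q / t := rfl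

noncomputable def dOcagneCoeff (q s : K) (b : ℕ) : K := (-s) ^ b * q ^ b.choose 2 / s

lemma dOcagneCoeff_succ (q s : K) (b : ℕ) :
    dOcagneCoeff q s (b + 1) = -(q ^ b * s) * dOcagneCoeff q s b := by
  rw [dOcagneCoeff, dOcagneCoeff, Nat.succ_choose_two, pow_add, pow_succ]
  ring

noncomputable def qFibGap (q x s : K) (b a : ℕ) : K := qFib q x (q ^ b * s) ((a : ℤ) - b)

noncomputable def ddetRatioFactor (q s : K) (k j : ℕ) : K :=
  (-s) ^ ((j.choose 2 : ℤ) - k * j) * q ^ (-(k : ℤ) * j.choose 2 + ∑ i ∈ range j, (i : ℤ) ^ 2)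

section DOcagne

variable {q s : K} (x : K)

lemma qFibPos_cassini (hs : s ≠ 0) (b : ℕ) :
    qFibPos q x s (b + 2) * qFibPos q x (q * s) b
      - qFibPos q x s (b + 1) * qFibPos q x (q * s) (b + 1) = dOcagneCoeff q s (b + 1) := by
  induction b with
  | zero =>
    simp only [dOcagneCoeff, qFibPos, Nat.choose_succ_self]
    field_simp
    ring
  | succ b ih =>
    rw [dOcagneCoeff_succ, ← ih, qFibPos_add_two q x s (b + 1), qFibPos_add_two q x (q * s) b]
    ring

lemma qFibPos_dOcagne (hs : s ≠ 0) (b d : ℕ) :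
    qFibPos q x s (b + 1 + d) * qFibPos q x (q * s) b
      - qFibPos q x s (b + 1) * qFibPos q x (q * s) (b + d) =
      dOcagneCoeff q s (b + 1) * qFibPos q x (q ^ (b + 1) * s) d := by
  induction d using Nat.twoStepInduction with
  | zero => simp [qFibPos]
  | one => simpa [qFibPos] using qFibPos_cassini x hs b
  | more d ih₀ ih₁ =>
    rw [← add_assoc, qFibPos_add_two q x s (b + 1 + d), ← add_assoc, qFibPos_add_two q x (q * s),
      qFibPos_add_two]
    linear_combination x * ih₁ + q ^ (b + d + 1) * s * ih₀

lemma qFib_dOcagne (hq : q ≠ 0) (hs : s ≠ 0) {a b : ℕ} (hba : b ≤ a) :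
    qFib q x s a * qFib q x (q * s) ((b : ℤ) - 1) - qFib q x s b * qFib q x (q * s) ((a : ℤ) - 1) =
      dOcagneCoeff q s b * qFibGap q x s b a := by
  obtain ⟨d, rfl⟩ := Nat.exists_eq_add_of_le hba
  cases b with
  | zero =>
    simp only [qFibGap, Nat.cast_zero, zero_sub, qFib_neg_one, qFib_zero, dOcagneCoeff,
      Nat.choose_zero_succ, pow_zero, sub_zero, one_mul, zero_add]
    field_simp
    ring
  | succ b =>
    have h₁ : ((b + 1 : ℕ) : ℤ) - 1 = (b : ℕ) := by push_cast; ring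
    have h₂ : ((b + 1 + d : ℕ) : ℤ) - 1 = (b + d : ℕ) := by push_cast; ring
    have h₃ : ((b + 1 + d : ℕ) : ℤ) - (b + 1 : ℕ) = (d : ℕ) := by push_cast; ring
    rw [qFibGap, h₁, h₂, h₃]
    exact qFibPos_dOcagne x hs b d

lemma ddet_zero_one_eq (hq : q ≠ 0) (hs : s ≠ 0) (k : ℕ) (p : Fin (k + 2)) :
    ddet q x s 0 1 k p = (∏ i : Fin (k + 1), dOcagneCoeff q s (p.succAbove i) ^ (k - i)) *
      ∏ i : Fin (k + 1), ∏ l ∈ Ioi i, qFibGap q x s (p.succAbove i) (p.succAbove l) := by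
  set A : Fin (k + 1) → ℕ := fun i => p.succAbove i
  have hmat : (Matrix.of fun i h : Fin (k + 1) =>
      qFib q x s (0 + (1 : ℕ) * ((i : ℕ) + if (p : ℕ) ≤ (i : ℕ) then 1 else 0)) ^ (h : ℕ) *
        qFib q x (q * s) (0 + (1 : ℕ) * ((i : ℕ) + if (p : ℕ) ≤ (i : ℕ) then 1 else 0) - 1) ^
          (k - (h : ℕ))) =
      Matrix.projVandermonde (fun i => qFib q x s (A i))
        (fun i => qFib q x (q * s) ((A i : ℤ) - 1)) := by
    ext i h
    simp only [Matrix.of_apply, Matrix.projVandermonde_apply, Fin.val_rev, A, Fin.val_succAbove_eq]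
    push_cast
    simp only [zero_add, one_mul]
  have hminor : ∀ i, ∀ l ∈ Ioi i,
      qFib q x s (A l) * qFib q x (q * s) ((A i : ℤ) - 1)
        - qFib q x s (A i) * qFib q x (q * s) ((A l : ℤ) - 1) =
      dOcagneCoeff q s (A i) * qFibGap q x s (A i) (A l) := fun i l hl =>
    qFib_dOcagne x hq hs (Fin.strictMono_succAbove p (mem_Ioi.mp hl)).le
  rw [ddet, hmat, Matrix.det_projVandermonde, ← prod_mul_distrib]
  refine prod_congr rfl fun i _ => ?_
  rw [prod_congr rfl (hminor i), prod_mul_distrib, prod_const, Fin.card_Ioi, Nat.add_sub_cancel]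

end DOcagne

section Constants

variable {q s : K}

lemma ddetRatioFactor_succ_mul (hq : q ≠ 0) (hs : s ≠ 0) {k j : ℕ} (hj : j ≤ k) :
    ddetRatioFactor q s k (j + 1) * ((-s) * q ^ j) ^ (k - j) = ddetRatioFactor q s k j := by
  have hs' : -s ≠ 0 := neg_ne_zero.mpr hs
  rw [ddetRatioFactor, ddetRatioFactor, mul_pow, ← pow_mul, ← zpow_natCast (-s), ← zpow_natCast q,
    Nat.succ_choose_two, sum_range_succ]
  push_cast [Nat.cast_sub hj]
  rw [mul_mul_mul_comm, ← zpow_add₀ hs', ← zpow_add₀ hq]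
  ring_nf

lemma ddetRatioFactor_mul_prod (hq : q ≠ 0) (hs : s ≠ 0) {k j : ℕ} (hj : j ≤ k + 1) :
    ddetRatioFactor q s k j * ∏ i ∈ range j, ((-s) * q ^ i) ^ (k - i) = 1 := by
  induction j with
  | zero => simp [ddetRatioFactor]
  | succ j ih =>
    rw [prod_range_succ, ← mul_assoc, mul_right_comm, ddetRatioFactor_succ_mul hq hs (by omega),
      ih (by omega)]

lemma prod_dOcagneCoeff_succAbove_mul (k : ℕ) (p : Fin (k + 2)) :
    (∏ i : Fin (k + 1), dOcagneCoeff q s (p.succAbove i) ^ (k - i)) *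
        ∏ i ∈ range p, ((-s) * q ^ i) ^ (k - i) =
      ∏ i : Fin (k + 1), dOcagneCoeff q s (i + 1) ^ (k - i) := by
  have hp : (p : ℕ) ≤ k + 1 := p.is_le
  simp only [Fin.val_succAbove_eq]
  rw [Fin.prod_univ_eq_prod_range
      (fun i => dOcagneCoeff q s (i + if (p : ℕ) ≤ i then 1 else 0) ^ (k - i)),
    Fin.prod_univ_eq_prod_range (fun i => dOcagneCoeff q s (i + 1) ^ (k - i)),
    ← prod_range_mul_prod_Ico _ hp, ← prod_range_mul_prod_Ico _ hp, mul_right_comm,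
    ← prod_mul_distrib]
  congr 1
  · refine prod_congr rfl fun i hi => ?_
    rw [if_neg (by simpa using hi), add_zero, dOcagneCoeff_succ, ← mul_pow]
    ring
  · exact prod_congr rfl fun i hi => by rw [if_pos (mem_Ico.mp hi).1]

lemma prod_dOcagneCoeff_succAbove (hq : q ≠ 0) (hs : s ≠ 0) (k : ℕ) (p : Fin (k + 2)) :
    ∏ i : Fin (k + 1), dOcagneCoeff q s (p.succAbove i) ^ (k - i) =
      ddetRatioFactor q s k p * ∏ i : Fin (k + 1), dOcagneCoeff q s (i + 1) ^ (k - i) := by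
  calc ∏ i : Fin (k + 1), dOcagneCoeff q s (p.succAbove i) ^ (k - i)
      = (∏ i : Fin (k + 1), dOcagneCoeff q s (p.succAbove i) ^ (k - i)) *
          (ddetRatioFactor q s k p * ∏ i ∈ range p, ((-s) * q ^ i) ^ (k - i)) := by
        rw [ddetRatioFactor_mul_prod hq hs p.is_le, mul_one]
    _ = ddetRatioFactor q s k p *
          ((∏ i : Fin (k + 1), dOcagneCoeff q s (p.succAbove i) ^ (k - i)) *
            ∏ i ∈ range p, ((-s) * q ^ i) ^ (k - i)) := by ring
    _ = _ := by rw [prod_dOcagneCoeff_succAbove_mul]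

end Constants

section Gaps

variable (q x s : K)

lemma prod_Iio_qFibGap {n : ℕ} (p : Fin n) :
    ∏ i ∈ Iio p, qFibGap q x s i p =
      ∏ i ∈ range p, qFib q x (q ^ ((p : ℕ) - (i + 1)) * s) (i + 1) := by
  rw [Fin.prod_Iio_val_eq_prod_range (fun i => qFibGap q x s i p), ← prod_range_reflect]
  refine prod_congr rfl fun i hi => ?_
  have hi : i < p := mem_range.mp hi
  rw [qFibGap, Nat.sub_sub, add_comm 1 i]
  congr 1
  omega

lemma prod_Ioi_qFibGap {n : ℕ} (p : Fin (n + 1)) :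
    ∏ l ∈ Ioi p, qFibGap q x s p l = ∏ i ∈ range (n - p), qFib q x (q ^ (p : ℕ) * s) (i + 1) := by
  rw [Fin.prod_Ioi_val_eq_prod_range (fun l => qFibGap q x s p l)]
  refine prod_congr rfl fun i _ => ?_
  rw [qFibGap]
  congr 1
  push_cast
  ring

lemma prod_pairs_qFibGap_succAbove (k : ℕ) (p : Fin (k + 2)) :
    (∏ i : Fin (k + 1), ∏ l ∈ Ioi i, qFibGap q x s (p.succAbove i) (p.succAbove l)) *
        ((∏ i ∈ range p, qFib q x (q ^ ((p : ℕ) - (i + 1)) * s) (i + 1)) *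
          ∏ i ∈ range (k + 1 - p), qFib q x (q ^ (p : ℕ) * s) (i + 1)) =
      ∏ i : Fin (k + 2), ∏ l ∈ Ioi i, qFibGap q x s i l := by
  rw [Fin.prod_pairs_succAbove (fun i l => qFibGap q x s i l) p, prod_Iio_qFibGap,
    prod_Ioi_qFibGap]
  ring

end Gaps

theorem ddet_ratio_general (q x s : K) (hq : q ≠ 0) (hs : s ≠ 0)
    (k j : ℕ) (hjk : j ≤ k + 1)
    (hd : ddet q x s 0 1 k 0 ≠ 0)
    (hden1 : ∀ i, 1 ≤ i → i ≤ j → qFib q x (q ^ (j - i) * s) (i : ℤ) ≠ 0)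
    (hden2 : ∀ i, 1 ≤ i → i ≤ k + 1 - j → qFib q x (q ^ j * s) (i : ℤ) ≠ 0) :
    ddet q x s 0 1 k j / ddet q x s 0 1 k 0 =
      (-s) ^ ((j.choose 2 : ℤ) - k * j) *
      q ^ (-(k : ℤ) * j.choose 2 + ∑ i ∈ Finset.range j, (i : ℤ) ^ 2) *
      qFibonomial q x s (k + 1) j := by
  have hdj := ddet_zero_one_eq x hq hs k ⟨j, by omega⟩
  have hd0 := ddet_zero_one_eq x hq hs k 0
  have hpairs := (prod_pairs_qFibGap_succAbove q x s k ⟨j, by omega⟩).trans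
    (prod_pairs_qFibGap_succAbove q x s k 0).symm
  rw [prod_dOcagneCoeff_succAbove hq hs] at hdj
  simp only [Fin.val_zero, Fin.succAbove_zero, Fin.val_succ, range_zero, prod_empty, pow_zero,
    one_mul, Nat.sub_zero] at hd0 hdj hpairs
  rw [hd0] at hd
  have hD1 : ∏ i ∈ range j, qFib q x (q ^ (j - (i + 1)) * s) (i + 1) ≠ 0 :=
    prod_ne_zero_iff.mpr fun i hi => by
      have := hden1 (i + 1) (by omega) (by simp only [mem_range] at hi; omega)
      rwa [Nat.cast_succ] at this
  have hD2 : ∏ i ∈ range (k + 1 - j), qFib q x (q ^ j * s) (i + 1) ≠ 0 :=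
    prod_ne_zero_iff.mpr fun i hi => by
      have := hden2 (i + 1) (by omega) (by simp only [mem_range] at hi; omega)
      rwa [Nat.cast_succ] at this
  change _ = ddetRatioFactor q s k j * _
  rw [hdj, hd0, qFibonomial, div_eq_iff hd, mul_div_assoc', div_mul_eq_mul_div,
    eq_div_iff (mul_ne_zero hD1 hD2), mul_assoc _ _ (_ * _), hpairs]
  ring

theorem ddet_ratio (q x s : K) (hq : q ≠ 0) (hs : s ≠ 0)
    (k j : ℕ) (hk : 1 ≤ k) (hjk : j ≤ k + 1)
    (hd : ddet q x s 0 1 k 0 ≠ 0)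
    (hden1 : ∀ i, 1 ≤ i → i ≤ j → qFib q x (q ^ (j - i) * s) (i : ℤ) ≠ 0)
    (hden2 : ∀ i, 1 ≤ i → i ≤ k + 1 - j → qFib q x (q ^ j * s) (i : ℤ) ≠ 0) :
    ddet q x s 0 1 k j / ddet q x s 0 1 k 0 =
      (-s) ^ ((j.choose 2 : ℤ) - k * j) *
      q ^ (-(k : ℤ) * j.choose 2 + ∑ i ∈ Finset.range j, (i : ℤ) ^ 2) *
      qFibonomial q x s (k + 1) j :=
  ddet_ratio_general q x s hq hs k j hjk hd hden1 hden2
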